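/- arXiv:2011.03878 — 5 statements merged into one kernel-verified Lean document; each statement's English description precedes it below -/
import Mathlib

section
/- If u is strictly concave and differentiable, then for any two payment-price vectors z'' = (τ'', p₁'', p₂'') and z' = (τ', p₁', p₂') whose value functions V(w,z) = max_b u(w - p₁ - τ - b) + u(w + p₂ + (1+r)b) satisfy V(w₀, z'') ≥ V(w₀, z') for some type w₀, and whose present discounted values satisfy m'' ≤ m' (where m = -p₁ - τ + p₂/(1+r)), the difference V(w, z'') - V(w, z') is nondecreasing in w; i.e., preferences over payment-price vectors satisfy single crossing in type. -/
/-!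
Substituting first-period consumption `c = w - p₁ - τ - b`, the savings value at type `w` becomes
`lifetimeValue u r M = ⨆ c, u c + u ((1 + r) * (M - c))` at lifetime wealth
`M = w + w / (1 + r) + m`.
As a partial supremum of a jointly concave function, `G = lifetimeValue u r` is concave, so its
increments `G (M + δ) - G M` decrease in `M`; the claim is this with `δ = m' - m'' ≥ 0`.
-/

/-- Value of the two-period savings problem given payment-price vector `(τ, p₁, p₂)`. -/
noncomputable def savingsValue (u : ℝ → ℝ) (r w τ p₁ p₂ : ℝ) : ℝ :=
  ⨆ b : ℝ, (u (w - p₁ - τ - b) + u (w + p₂ + (1 + r) * b))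

/-- Present discounted value of a payment-price vector. -/
noncomputable def pdv (r τ p₁ p₂ : ℝ) : ℝ := -p₁ - τ + p₂ / (1 + r)

open Set

noncomputable def lifetimeValue (u : ℝ → ℝ) (r M : ℝ) : ℝ :=
  ⨆ c : ℝ, (u c + u ((1 + r) * (M - c)))

section PartialSupremum

variable {E F : Type*} [AddCommGroup E] [Module ℝ E] [AddCommGroup F] [Module ℝ F]
  {f : E → F → ℝ}

/-- Comparing `(x / 2, y)` with the midpoint of `(x, y₀)` and `(0, 2 y - y₀)`. -/
theorem ConcaveOn.not_bddAbove_range_of_not_bddAbove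
    (hf : ConcaveOn ℝ univ fun p : E × F => f p.1 p.2) {y₀ : F}
    (h : ¬BddAbove (range fun x => f x y₀)) (y : F) :
    ¬BddAbove (range fun x => f x y) := by
  rw [not_bddAbove_iff] at h ⊢
  intro N
  obtain ⟨_, ⟨x, rfl⟩, hx⟩ := h (2 * N - f 0 ((2 : ℝ) • y - y₀))
  refine ⟨_, ⟨(2 : ℝ)⁻¹ • x, rfl⟩, ?_⟩
  have hmid := hf.2 (mem_univ (x, y₀)) (mem_univ (0, (2 : ℝ) • y - y₀))
    (by norm_num : (0 : ℝ) ≤ 2⁻¹) (by norm_num : (0 : ℝ) ≤ 2⁻¹) (by norm_num)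
  have hpt : (2 : ℝ)⁻¹ • (x, y₀) + (2 : ℝ)⁻¹ • ((0 : E), (2 : ℝ) • y - y₀)
      = ((2 : ℝ)⁻¹ • x, y) := by
    ext <;> simp only [Prod.fst_add, Prod.snd_add, Prod.smul_fst, Prod.smul_snd] <;> module
  rw [hpt, smul_eq_mul, smul_eq_mul] at hmid
  dsimp only at hmid hx
  linarith

/-- If one fibre is unbounded above then all are, and the supremum is the junk value `0`
everywhere. -/
theorem ConcaveOn.concaveOn_iSup_fst (hf : ConcaveOn ℝ univ fun p : E × F => f p.1 p.2) :
    ConcaveOn ℝ univ fun y => ⨆ x, f x y := by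
  by_cases hbdd : ∀ y, BddAbove (range fun x => f x y)
  · refine ⟨convex_univ, fun y₁ _ y₂ _ a b ha hb hab => ?_⟩
    rw [smul_eq_mul, smul_eq_mul, Real.mul_iSup_of_nonneg ha, Real.mul_iSup_of_nonneg hb]
    refine ciSup_add_ciSup_le fun x₁ x₂ => ?_
    calc a * f x₁ y₁ + b * f x₂ y₂ ≤ f (a • x₁ + b • x₂) (a • y₁ + b • y₂) :=
          hf.2 (mem_univ (x₁, y₁)) (mem_univ (x₂, y₂)) ha hb hab
      _ ≤ ⨆ x, f x (a • y₁ + b • y₂) := le_ciSup (hbdd _) _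
  · obtain ⟨y₀, hy₀⟩ := not_forall.1 hbdd
    have hzero : (fun y => ⨆ x, f x y) = fun _ => 0 := funext fun y =>
      Real.iSup_of_not_bddAbove (hf.not_bddAbove_range_of_not_bddAbove hy₀ y)
    rw [hzero]
    exact concaveOn_const 0 convex_univ

end PartialSupremum

section Increments

variable {G : ℝ → ℝ}

/-- Both `a + δ` and `b` are convex combinations of `a` and `b + δ`, with swapped weights. -/
theorem ConcaveOn.antitone_sub_add (hG : ConcaveOn ℝ univ G) {δ : ℝ} (hδ : 0 ≤ δ) :
    Antitone fun x => G (x + δ) - G x := by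
  intro a b hab
  dsimp only
  rcases (show 0 ≤ b - a + δ by linarith).eq_or_lt with hs | hs
  · obtain rfl : b = a := by linarith
    exact le_rfl
  have hla : 0 ≤ (b - a) / (b - a + δ) := div_nonneg (by linarith) hs.le
  have hmu : 0 ≤ δ / (b - a + δ) := div_nonneg hδ hs.le
  have hsum : (b - a) / (b - a + δ) + δ / (b - a + δ) = 1 := by field_simp
  have h₁ := hG.2 (mem_univ a) (mem_univ (b + δ)) hla hmu hsum
  have h₂ := hG.2 (mem_univ a) (mem_univ (b + δ)) hmu hla (by linarith)
  have e₁ : (b - a) / (b - a + δ) * a + δ / (b - a + δ) * (b + δ) = a + δ := by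
    field_simp; ring
  have e₂ : δ / (b - a + δ) * a + (b - a) / (b - a + δ) * (b + δ) = b := by
    field_simp; ring
  simp only [smul_eq_mul] at h₁ h₂
  rw [e₁] at h₁
  rw [e₂] at h₂
  linear_combination h₁ + h₂ - (G a + G (b + δ)) * hsum

theorem ConcaveOn.monotone_sub_add (hG : ConcaveOn ℝ univ G) {d₁ d₂ : ℝ} (hd : d₁ ≤ d₂) :
    Monotone fun x => G (x + d₁) - G (x + d₂) := by
  intro x y hxy
  have h := hG.antitone_sub_add (sub_nonneg.2 hd) (add_le_add_left hxy d₁)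
  simp only [add_add_sub_cancel] at h
  dsimp only
  linarith

end Increments

theorem concaveOn_lifetimeValue {u : ℝ → ℝ} (hu : ConcaveOn ℝ univ u) (r : ℝ) :
    ConcaveOn ℝ univ (lifetimeValue u r) := by
  have hobj : ConcaveOn ℝ univ fun p : ℝ × ℝ => u p.1 + u ((1 + r) * (p.2 - p.1)) :=
    (hu.comp_linearMap (LinearMap.fst ℝ ℝ ℝ)).add
      (hu.comp_linearMap ((1 + r) • (LinearMap.snd ℝ ℝ ℝ - LinearMap.fst ℝ ℝ ℝ)))
  exact hobj.concaveOn_iSup_fst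

theorem savingsValue_eq_lifetimeValue (u : ℝ → ℝ) {r : ℝ} (hr : 1 + r ≠ 0) (w τ p₁ p₂ : ℝ) :
    savingsValue u r w τ p₁ p₂ = lifetimeValue u r (w + w / (1 + r) + pdv r τ p₁ p₂) := by
  rw [savingsValue, lifetimeValue, ← (Equiv.subLeft (w - p₁ - τ)).iSup_comp]
  congr 1
  funext b
  rw [Equiv.subLeft_apply, sub_sub_cancel, pdv]
  congr 2
  field_simp
  ring

theorem stmt0_general (u : ℝ → ℝ) (r : ℝ) (hr : 0 < r)
    (hu : StrictConcaveOn ℝ Set.univ u)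
    (τ'' p₁'' p₂'' τ' p₁' p₂' : ℝ)
    (hm : pdv r τ'' p₁'' p₂'' ≤ pdv r τ' p₁' p₂') :
    Monotone (fun w => savingsValue u r w τ'' p₁'' p₂'' - savingsValue u r w τ' p₁' p₂') := by
  have hr₁ : 0 < 1 + r := by linarith
  simp_rw [savingsValue_eq_lifetimeValue u hr₁.ne']
  exact ((concaveOn_lifetimeValue hu.concaveOn r).monotone_sub_add hm).comp
    (monotone_id.add (monotone_id.div_const hr₁.le))

/-- Single crossing of preferences over payment-price vectors in type. -/
theorem stmt0 (u : ℝ → ℝ) (r : ℝ) (hr : 0 < r)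
    (hu : StrictConcaveOn ℝ Set.univ u) (hud : Differentiable ℝ u)
    (τ'' p₁'' p₂'' τ' p₁' p₂' w₀ : ℝ)
    (hw₀ : savingsValue u r w₀ τ' p₁' p₂' ≤ savingsValue u r w₀ τ'' p₁'' p₂'')
    (hm : pdv r τ'' p₁'' p₂'' ≤ pdv r τ' p₁' p₂') :
    Monotone (fun w => savingsValue u r w τ'' p₁'' p₂'' - savingsValue u r w τ' p₁' p₂') :=
  stmt0_general u r hr hu τ'' p₁'' p₂'' τ' p₁' p₂' hm
end

section
/- For the two-period savings problem with strictly concave differentiable u, if two payment-price vectors z' and z'' have present discounted values m' > m'', then the optimal second-period consumption under z' exceeds that under z'', and consequently V₁(w, z') < V₁(w, z'') for all w, where V₁ denotes the partial derivative of the value function in w. -/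
open Set

theorem ConcaveOn.le_add_deriv_mul_sub {S : Set ℝ} {f : ℝ → ℝ} {x y : ℝ} (hf : ConcaveOn ℝ S f)
    (hx : x ∈ S) (hy : y ∈ S) (hfd : DifferentiableAt ℝ f x) :
    f y ≤ f x + deriv f x * (y - x) := by
  rcases lt_trichotomy y x with hyx | rfl | hxy
  · have h := hf.deriv_le_slope hy hx hyx hfd
    rw [slope_def_field, le_div_iff₀ (sub_pos.mpr hyx)] at h
    linarith
  · simp
  · have h := hf.slope_le_deriv hx hy hxy hfd
    rw [slope_def_field, div_le_iff₀ (sub_pos.mpr hxy)] at h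
    linarith

theorem HasDerivAt.of_le_of_le_affine {φ V : ℝ → ℝ} {L w : ℝ} (hφ : HasDerivAt φ L w)
    (hφV : ∀ x, φ x ≤ V x) (hw : φ w = V w) (hV : ∀ x, V x ≤ V w + L * (x - w)) :
    HasDerivAt V L w := by
  rw [hasDerivAt_iff_isLittleO] at hφ ⊢
  refine (Asymptotics.isBigO_of_le _ fun x => ?_).trans_isLittleO hφ
  have hupper : V x - V w - (x - w) • L ≤ 0 := by
    rw [smul_eq_mul]; linarith [hV x]
  have hlower : φ x - φ w - (x - w) • L ≤ V x - V w - (x - w) • L := by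
    rw [hw]; linarith [hφV x]
  rw [Real.norm_eq_abs, Real.norm_eq_abs, abs_of_nonpos hupper]
  linarith [neg_abs_le (φ x - φ w - (x - w) • L)]

theorem deriv_eq_mul_deriv_of_isMaxOn {u : ℝ → ℝ} {A B k b₀ : ℝ}
    (hA : DifferentiableAt ℝ u (A - b₀)) (hB : DifferentiableAt ℝ u (B + k * b₀))
    (hb : IsMaxOn (fun b => u (A - b) + u (B + k * b)) univ b₀) :
    deriv u (A - b₀) = k * deriv u (B + k * b₀) := by
  have hlin₁ : HasDerivAt (fun b : ℝ => A - b) (-1) b₀ := by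
    simpa using (hasDerivAt_id b₀).const_sub A
  have hlin₂ : HasDerivAt (fun b : ℝ => B + k * b) k b₀ := by
    simpa using ((hasDerivAt_id b₀).const_mul k).const_add B
  have hsum := (hA.hasDerivAt.comp b₀ hlin₁).add (hB.hasDerivAt.comp b₀ hlin₂)
  have hzero := (hb.isLocalMax Filter.univ_mem).hasDerivAt_eq_zero hsum
  linarith

section SavingsProblem

variable {u : ℝ → ℝ} {r τ p₁ p₂ w b₀ : ℝ}

theorem hasDerivAt_savingsValue (hu : ConcaveOn ℝ univ u) (hud : Differentiable ℝ u)
    (hb : IsMaxOn (fun b => u (w - p₁ - τ - b) + u (w + p₂ + (1 + r) * b)) univ b₀) :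
    HasDerivAt (fun x => savingsValue u r x τ p₁ p₂)
      (deriv u (w - p₁ - τ - b₀) + deriv u (w + p₂ + (1 + r) * b₀)) w := by
  set F : ℝ → ℝ → ℝ := fun x b => u (x - p₁ - τ - b) + u (x + p₂ + (1 + r) * b)
  set L := deriv u (w - p₁ - τ - b₀) + deriv u (w + p₂ + (1 + r) * b₀)
  have hfoc := deriv_eq_mul_deriv_of_isMaxOn (hud _) (hud _) hb
  -- The tangent lines of `u` at the optimal consumptions bound every plan, uniformly in `x`.
  have hF : ∀ x b, F x b ≤ F w b₀ + L * (x - w) := by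
    intro x b
    have t₁ := hu.le_add_deriv_mul_sub (mem_univ _) (mem_univ (x - p₁ - τ - b))
      (hud (w - p₁ - τ - b₀))
    have t₂ := hu.le_add_deriv_mul_sub (mem_univ _) (mem_univ (x + p₂ + (1 + r) * b))
      (hud (w + p₂ + (1 + r) * b₀))
    simp only [F, L]
    linear_combination t₁ + t₂ + (b₀ - b) * hfoc
  have hbdd : ∀ x, BddAbove (range (F x)) := fun x =>
    ⟨_, by rintro _ ⟨b, rfl⟩; exact hF x b⟩
  have hVw : savingsValue u r w τ p₁ p₂ = F w b₀ :=
    le_antisymm (ciSup_le fun b => hb (mem_univ b)) (le_ciSup (hbdd w) b₀)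
  have hφ : HasDerivAt (fun x => F x b₀) L w := by
    have h₁ : HasDerivAt (fun x => x - p₁ - τ - b₀) 1 w :=
      (((hasDerivAt_id' w).sub_const p₁).sub_const τ).sub_const b₀
    have h₂ : HasDerivAt (fun x => x + p₂ + (1 + r) * b₀) 1 w :=
      ((hasDerivAt_id' w).add_const p₂).add_const ((1 + r) * b₀)
    have h := ((hud _).hasDerivAt.comp w h₁).add ((hud _).hasDerivAt.comp w h₂)
    simp only [Function.comp_def, mul_one] at h
    exact h
  exact hφ.of_le_of_le_affine (fun x => le_ciSup (hbdd x) b₀) hVw.symm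
    (fun x => hVw ▸ ciSup_le (hF x))

theorem deriv_savingsValue (hu : ConcaveOn ℝ univ u) (hud : Differentiable ℝ u)
    (hb : IsMaxOn (fun b => u (w - p₁ - τ - b) + u (w + p₂ + (1 + r) * b)) univ b₀) :
    deriv (fun x => savingsValue u r x τ p₁ p₂) w
      = (2 + r) * deriv u (w + p₂ + (1 + r) * b₀) := by
  rw [(hasDerivAt_savingsValue hu hud hb).deriv,
    deriv_eq_mul_deriv_of_isMaxOn (hud _) (hud _) hb]
  ring

theorem lifetime_budget (hr : 1 + r ≠ 0) (b : ℝ) :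
    (1 + r) * (w - p₁ - τ - b) + (w + p₂ + (1 + r) * b)
      = (2 + r) * w + (1 + r) * pdv r τ p₁ p₂ := by
  unfold pdv
  field_simp
  ring

end SavingsProblem

theorem lt_of_deriv_eq_mul_deriv {u : ℝ → ℝ} (hu : StrictAnti (deriv u)) {k c₁ c₂ d₁ d₂ : ℝ}
    (hk : 0 < k) (hc : deriv u c₁ = k * deriv u c₂) (hd : deriv u d₁ = k * deriv u d₂)
    (hwealth : k * d₁ + d₂ < k * c₁ + c₂) : d₂ < c₂ := by
  by_contra! h
  have h₁ : c₁ ≤ d₁ := hu.le_iff_ge.mp <| by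
    rw [hc, hd]; exact mul_le_mul_of_nonneg_left (hu.antitone h) hk.le
  nlinarith

theorem stmt2_general (u : ℝ → ℝ) (r : ℝ) (hr : 0 < r)
    (hu : StrictConcaveOn ℝ Set.univ u) (hud : Differentiable ℝ u)
    (τ' p₁' p₂' τ'' p₁'' p₂'' : ℝ)
    (hm : pdv r τ'' p₁'' p₂'' < pdv r τ' p₁' p₂')
    (b' b'' : ℝ → ℝ)
    (hb' : ∀ w, IsMaxOn
      (fun b => u (w - p₁' - τ' - b) + u (w + p₂' + (1 + r) * b)) Set.univ (b' w))
    (hb'' : ∀ w, IsMaxOn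
      (fun b => u (w - p₁'' - τ'' - b) + u (w + p₂'' + (1 + r) * b)) Set.univ (b'' w)) :
    ∀ w, w + p₂'' + (1 + r) * b'' w < w + p₂' + (1 + r) * b' w ∧
      deriv (fun w => savingsValue u r w τ' p₁' p₂') w <
        deriv (fun w => savingsValue u r w τ'' p₁'' p₂'') w := by
  intro w
  have hk : 0 < 1 + r := by linarith
  have hanti : StrictAnti (deriv u) :=
    strictAntiOn_univ.mp (hu.strictAntiOn_deriv fun x _ => hud x)
  have hc : w + p₂'' + (1 + r) * b'' w < w + p₂' + (1 + r) * b' w := by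
    refine lt_of_deriv_eq_mul_deriv hanti hk
      (deriv_eq_mul_deriv_of_isMaxOn (hud _) (hud _) (hb' w))
      (deriv_eq_mul_deriv_of_isMaxOn (hud _) (hud _) (hb'' w)) ?_
    rw [lifetime_budget hk.ne', lifetime_budget hk.ne']
    gcongr
  refine ⟨hc, ?_⟩
  rw [deriv_savingsValue hu.concaveOn hud (hb' w), deriv_savingsValue hu.concaveOn hud (hb'' w)]
  exact mul_lt_mul_of_pos_left (hanti hc) (by linarith)

/-- Higher PDV yields higher optimal second-period consumption and lower
marginal value of income `V₁`. -/
theorem stmt2 (u : ℝ → ℝ) (r : ℝ) (hr : 0 < r)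
    (hu : StrictConcaveOn ℝ Set.univ u) (hud : Differentiable ℝ u)
    (hu' : StrictAnti (deriv u))
    (τ' p₁' p₂' τ'' p₁'' p₂'' : ℝ)
    (hm : pdv r τ'' p₁'' p₂'' < pdv r τ' p₁' p₂')
    (b' b'' : ℝ → ℝ)
    (hb' : ∀ w, IsMaxOn
      (fun b => u (w - p₁' - τ' - b) + u (w + p₂' + (1 + r) * b)) Set.univ (b' w))
    (hb'' : ∀ w, IsMaxOn
      (fun b => u (w - p₁'' - τ'' - b) + u (w + p₂'' + (1 + r) * b)) Set.univ (b'' w)) :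
    ∀ w, w + p₂'' + (1 + r) * b'' w < w + p₂' + (1 + r) * b' w ∧
      deriv (fun w => savingsValue u r w τ' p₁' p₂') w <
        deriv (fun w => savingsValue u r w τ'' p₁'' p₂'') w :=
  stmt2_general u r hr hu hud τ' p₁' p₂' τ'' p₁'' p₂'' hm b' b'' hb' hb''
end

section
/- In any housing market equilibrium, the allocation of individuals to locations is monotone: if w'' > w' and individual w' is assigned a location of quality h' while w'' is assigned a location of quality h'', then h'' ≥ h'. Formally, if h'' > h' with associated PDVs m'' < m', and a type w' weakly prefers (h'', m'') to (h', m'), i.e. h'' + V(w', m'') ≥ h' + V(w', m'), then every type w'' > w' satisfies h'' + V(w'', m'') ≥ h' + V(w'', m'), with strict inequality whenever the first preference is strict. -/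
/-!
For fixed `m'' < m'`, the gain `V w m' - V w m''` from the larger transfer has derivative
`V₁ w m' - V₁ w m'' < 0` in the type `w`, so it is strictly decreasing. A richer type therefore
values the extra money less than `w'` does, and a quality premium `h'' - h'` that compensates `w'`
for the loss `m' - m''` compensates `w''` strictly.
-/

lemma strictAnti_sub_of_hasDerivAt_lt {f g f' g' : ℝ → ℝ}
    (hf : ∀ x, HasDerivAt f (f' x) x) (hg : ∀ x, HasDerivAt g (g' x) x)
    (hlt : ∀ x, f' x < g' x) : StrictAnti fun x => f x - g x :=
  strictAnti_of_hasDerivAt_neg (fun x => (hf x).sub (hg x)) fun x => sub_neg.2 (hlt x)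

theorem stmt4_general (V V₁ : ℝ → ℝ → ℝ)
    (hV₁ : ∀ w m, HasDerivAt (fun w' => V w' m) (V₁ w m) w)
    (hV₁anti : ∀ w, StrictAnti (V₁ w))
    (h' h'' m' m'' w' w'' : ℝ)
    (hm : m'' < m') (hw : w' < w'') :
    (h' + V w' m' ≤ h'' + V w' m'' → h' + V w'' m' ≤ h'' + V w'' m'') ∧
    (h' + V w' m' < h'' + V w' m'' → h' + V w'' m' < h'' + V w'' m'') := by
  have hgain : V w'' m' - V w'' m'' < V w' m' - V w' m'' :=
    strictAnti_sub_of_hasDerivAt_lt (hV₁ · m') (hV₁ · m'') (fun w => hV₁anti w hm) hw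
  exact ⟨fun _ => by linarith, fun _ => by linarith⟩

/-- Lemma 1 (monotone equilibrium): single crossing of preferences over
location quality/PDV pairs in type. -/
theorem stmt4 (V V₁ : ℝ → ℝ → ℝ)
    (hVc : Continuous fun p : ℝ × ℝ => V p.1 p.2)
    (hVm : ∀ w, StrictMono (V w))
    (hV₁ : ∀ w m, HasDerivAt (fun w' => V w' m) (V₁ w m) w)
    (hV₁anti : ∀ w, StrictAnti (V₁ w))
    (h' h'' m' m'' w' w'' : ℝ)
    (hh : h' < h'') (hm : m'' < m') (hw : w' < w'') :
    (h' + V w' m' ≤ h'' + V w' m'' → h' + V w'' m' ≤ h'' + V w'' m'') ∧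
    (h' + V w' m' < h'' + V w' m'' → h' + V w'' m' < h'' + V w'' m'') :=
  stmt4_general V V₁ hV₁ hV₁anti h' h'' m' m'' w' w'' hm hw
end

section
/- Suppose two absolutely continuous value functions Û and Ũ on [w̲, w̄] satisfy Û(w̲) = Ũ(w̲), both satisfy an envelope formula U(w) = U(w̲) + ∫_{w̲}^{w} V₁(x, M(x)) dx where M is the associated money value and V₁(w, m) is strictly decreasing in m, and Û(w) > Ũ(w) iff M̂(w) > M̃(w). Then there cannot exist w'' > w' with Û(w') = Ũ(w') and Û(w) > Ũ(w) for all w in (w', w'']; consequently Û = Ũ and M̂ = M̃ everywhere. -/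
/-!
Write `D = Û - Ũ` and `f(x) = V₁(x, M̂(x)) - V₁(x, M̃(x))`. The envelope formulas make `D` a
primitive of `f` with `D(w̲) = 0`, and since `V₁` is strictly decreasing in money, `f` has the
sign opposite to `D` wherever `D ≠ 0`. Hence `(D²)' = 2 D f ≤ 0`, so `D²` is antitone and
vanishes at `w̲`: the value functions never separate, and strict monotonicity of `V` in money
then forces `M̂ = M̃`.
-/

open Set

theorem eqOn_zero_of_hasDerivAt_of_mul_nonpos {u u' : ℝ → ℝ} {a b : ℝ}
    (hcont : ContinuousOn u (Icc a b)) (hderiv : ∀ x ∈ Ioo a b, HasDerivAt u (u' x) x)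
    (hsign : ∀ x ∈ Ioo a b, u x * u' x ≤ 0) (ha : u a = 0) :
    ∀ x ∈ Icc a b, u x = 0 := by
  have hanti : AntitoneOn (fun x => u x * u x) (Icc a b) := by
    refine antitoneOn_of_hasDerivWithinAt_nonpos (convex_Icc a b) (hcont.mul hcont)
      (f' := fun x => u' x * u x + u x * u' x) ?_ ?_ <;> rw [interior_Icc]
    · exact fun x hx => ((hderiv x hx).mul (hderiv x hx)).hasDerivWithinAt
    · intro x hx
      linarith [hsign x hx]
  intro x hx
  have hsq : u x * u x ≤ 0 := by
    simpa [ha] using hanti (left_mem_Icc.2 (hx.1.trans hx.2)) hx hx.1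
  nlinarith [mul_self_nonneg (u x)]

theorem sub_mul_sub_nonpos_of_strictAnti {α : Type*} [LinearOrder α] {g : α → ℝ}
    (hg : StrictAnti g) {u u' : ℝ} {m m' : α} (h : u > u' ↔ m > m') :
    (u - u') * (g m - g m') ≤ 0 := by
  rcases lt_trichotomy m m' with hlt | rfl | hgt
  · have hu : u ≤ u' := not_lt.1 fun hu => (h.1 hu).not_gt hlt
    exact mul_nonpos_of_nonpos_of_nonneg (sub_nonpos.2 hu) (sub_nonneg.2 (hg hlt).le)
  · simp
  · exact mul_nonpos_of_nonneg_of_nonpos (sub_nonneg.2 (h.2 hgt).le) (sub_nonpos.2 (hg hgt).le)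

theorem stmt8_general (wlo whi : ℝ)
    (V V₁ : ℝ → ℝ → ℝ)
    (hVm : ∀ w, StrictMono (V w))
    (hV₁anti : ∀ w, StrictAnti (V₁ w))
    (ℓ Mh Mt Uh Ut : ℝ → ℝ)
    (hUh : ∀ w, Uh w = ℓ w + V w (Mh w))
    (hUt : ∀ w, Ut w = ℓ w + V w (Mt w))
    (hch : Continuous fun x => V₁ x (Mh x))
    (hct : Continuous fun x => V₁ x (Mt x))
    (henvh : ∀ w ∈ Set.Icc wlo whi, Uh w = Uh wlo + ∫ x in wlo..w, V₁ x (Mh x))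
    (henvt : ∀ w ∈ Set.Icc wlo whi, Ut w = Ut wlo + ∫ x in wlo..w, V₁ x (Mt x))
    (h0 : Uh wlo = Ut wlo)
    (hiff : ∀ w, Uh w > Ut w ↔ Mh w > Mt w) :
    (¬ ∃ w' w'', wlo ≤ w' ∧ w' < w'' ∧ w'' ≤ whi ∧ Uh w' = Ut w' ∧
        ∀ w ∈ Set.Ioc w' w'', Uh w > Ut w) ∧
    (∀ w ∈ Set.Icc wlo whi, Uh w = Ut w ∧ Mh w = Mt w) := by
  set f : ℝ → ℝ := fun x => V₁ x (Mh x) - V₁ x (Mt x)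
  have hf : Continuous f := hch.sub hct
  have hgap : ∀ w ∈ Icc wlo whi, Uh w - Ut w = ∫ x in wlo..w, f x := fun w hw => by
    rw [henvh w hw, henvt w hw, h0,
      intervalIntegral.integral_sub (hch.intervalIntegrable _ _) (hct.intervalIntegrable _ _)]
    ring
  have hprim_zero : ∀ w ∈ Icc wlo whi, ∫ x in wlo..w, f x = 0 :=
    eqOn_zero_of_hasDerivAt_of_mul_nonpos
      (intervalIntegral.continuous_primitive (fun _ _ => hf.intervalIntegrable _ _) wlo).continuousOn
      (fun w _ => (hf.integral_hasStrictDerivAt wlo w).hasDerivAt)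
      (fun w hw => hgap w (Ioo_subset_Icc_self hw) ▸
        sub_mul_sub_nonpos_of_strictAnti (hV₁anti w) (hiff w))
      intervalIntegral.integral_same
  have hagree : ∀ w ∈ Icc wlo whi, Uh w = Ut w ∧ Mh w = Mt w := fun w hw => by
    have hU : Uh w = Ut w := sub_eq_zero.1 ((hgap w hw).trans (hprim_zero w hw))
    refine ⟨hU, (hVm w).injective ?_⟩
    linarith [hUh w, hUt w]
  refine ⟨fun ⟨w', w'', hw', hlt, hw'', _, hsep⟩ => ?_, hagree⟩
  exact (hsep w'' ⟨hlt, le_rfl⟩).ne' (hagree w'' ⟨hw'.trans hlt.le, hw''⟩).1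

/-- Key step of Lemma 3: two value functions with the same starting value, both
satisfying the envelope formula with `V₁` strictly decreasing in the money value,
cannot separate; hence the value functions and money values coincide. -/
theorem stmt8 (wlo whi : ℝ) (hw : wlo < whi)
    (V V₁ : ℝ → ℝ → ℝ)
    (hVm : ∀ w, StrictMono (V w))
    (hV₁anti : ∀ w, StrictAnti (V₁ w))
    (ℓ Mh Mt Uh Ut : ℝ → ℝ)
    (hUh : ∀ w, Uh w = ℓ w + V w (Mh w))
    (hUt : ∀ w, Ut w = ℓ w + V w (Mt w))
    (hch : Continuous fun x => V₁ x (Mh x))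
    (hct : Continuous fun x => V₁ x (Mt x))
    (henvh : ∀ w ∈ Set.Icc wlo whi, Uh w = Uh wlo + ∫ x in wlo..w, V₁ x (Mh x))
    (henvt : ∀ w ∈ Set.Icc wlo whi, Ut w = Ut wlo + ∫ x in wlo..w, V₁ x (Mt x))
    (h0 : Uh wlo = Ut wlo)
    (hiff : ∀ w, Uh w > Ut w ↔ Mh w > Mt w) :
    (¬ ∃ w' w'', wlo ≤ w' ∧ w' < w'' ∧ w'' ≤ whi ∧ Uh w' = Ut w' ∧
        ∀ w ∈ Set.Ioc w' w'', Uh w > Ut w) ∧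
    (∀ w ∈ Set.Icc wlo whi, Uh w = Ut w ∧ Mh w = Mt w) :=
  stmt8_general wlo whi V V₁ hVm hV₁anti ℓ Mh Mt Uh Ut hUh hUt hch hct henvh henvt h0 hiff
end

section
/- In the model with rental homes, any equilibrium location allocation is monotone in type: since the single-crossing property 'if a lower type prefers a higher-quality, lower-PDV location, so does a higher type' holds regardless of whether a location is rented or owner-occupied (both renters and owners rank payment streams by PDV given the ability to borrow and save at rate r), the equilibrium assigns weakly higher location qualities to higher types. -/
theorem higher_type_strictly_prefers_of_single_crossing {α : Type*} [Preorder α]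
    {V : α → ℝ → ℝ} {w w' : α} (hVm : Monotone (V w'))
    (hSC : ∀ m₂ m₁ : ℝ, m₂ < m₁ → StrictMono fun w => V w m₂ - V w m₁)
    (hw : w < w') {l l' : ℝ × ℝ} (hq : l.1 < l'.1)
    (hpref : l.1 + V w l.2 ≤ l'.1 + V w l'.2) :
    l.1 + V w' l.2 < l'.1 + V w' l'.2 := by
  rcases le_or_gt l.2 l'.2 with hm | hm
  · linarith [hVm hm]
  · linarith [hSC l'.2 l.2 hm hw]

/-- Lemma 8 (monotonicity with renters): when every location — rented or
owner-occupied — is evaluated by its quality and the PDV of its payment stream via a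
value `V` strictly increasing in PDV and satisfying single crossing in type, any
equilibrium allocation assigns weakly higher location qualities to higher types. -/
theorem stmt17 (V : ℝ → ℝ → ℝ)
    (hVm : ∀ w, StrictMono (V w))
    (hSC : ∀ m₂ m₁ : ℝ, m₂ < m₁ → StrictMono fun w => V w m₂ - V w m₁)
    (L : Set (ℝ × ℝ)) (a : ℝ → ℝ × ℝ)
    (ha : ∀ w, a w ∈ L)
    (hopt : ∀ w, ∀ l ∈ L, l.1 + V w l.2 ≤ (a w).1 + V w (a w).2) :
    Monotone fun w => (a w).1 := by
  intro w w' hle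
  rcases hle.eq_or_lt with rfl | hlt
  · exact le_rfl
  by_contra! hq
  exact (hopt w' (a w) (ha w)).not_gt <|
    higher_type_strictly_prefers_of_single_crossing (hVm w').monotone hSC hlt hq
      (hopt w (a w') (ha w'))
end
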